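/- (Multiplicative property of Q.) Let (φ', ℓ') and (φ'', ℓ'') be gauge data with r' = φ'∘ℓ' and r'' = φ''∘ℓ'', let β' be a (φ', ℓ')-quasiperiodic family and β'' a (φ'', ℓ'')-quasiperiodic family with β'_1 = β''_0, and let μ be an assignment t ↦ μ_t of linear maps E → 𝔤, smooth in t, with μ_t = β'_{2t} for t ∈ [0, 1/2], μ_t = β''_{2t−1} for t ∈ [1/2, 1], and μ_{t+1} = (φ''∘φ')∘μ_t − (φ''∘r' + r'') for all t (the concatenation β''*β'). Then μ is quasiperiodic for the composite gauge datum (φ''∘φ', ℓ' + φ'⁻¹∘ℓ''), and for all x, y ∈ E: Q(μ)(x, y) = Q(β')(x, y) + Q(β'')(x, y) + (1/2)( ℓ'' ∧_B r' )(x, y). (The correction term is the value of the 2-form λ = (1/2) pr₁*θ^L · pr₂*θ^R on G × G pulled back by the pair of gauge transformations, as in the paper's Proposition on properties of Q.) -/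

import Mathlib

/-!
On `[0, 1/2]` and `[1/2, 1]` the family `μ` is an affine reparametrisation of `β'` and `β''`,
and `∫ β_t ∧_B β̇_t dt` is invariant under affine changes of time, so the integral term of
`Q(μ)` is the sum of those of `Q(β')` and `Q(β'')`. For the boundary terms, `μ_0 = β'_0`,
the `φ'`-invariance of `B` moves `φ'⁻¹` across the wedge, and `φ' β'_0 = β''_0 + r'`
produces the correction `ℓ'' ∧_B r'`.
-/

/-- `(a ∧_B b)(x, y) = B(a x, b y) - B(a y, b x)` for maps `a, b : E → 𝔤`. -/
def wedgeB {𝔤 E : Type*} [NormedAddCommGroup 𝔤] [NormedSpace ℝ 𝔤]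
    [AddCommGroup E] [Module ℝ E]
    (B : 𝔤 →ₗ[ℝ] 𝔤 →ₗ[ℝ] ℝ) (a b : E → 𝔤) (x y : E) : ℝ :=
  B (a x) (b y) - B (a y) (b x)

/-- A `(φ, r)`-quasiperiodic family of linear maps `E → 𝔤`: smooth in `t` and
`β (t+1) = φ ∘ β t - r`. -/
def QuasiPeriodic {𝔤 E : Type*} [NormedAddCommGroup 𝔤] [NormedSpace ℝ 𝔤]
    [AddCommGroup E] [Module ℝ E]
    (φ : 𝔤 → 𝔤) (r : E → 𝔤) (β : ℝ → E →ₗ[ℝ] 𝔤) : Prop :=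
  (∀ x : E, ContDiff ℝ (⊤ : ℕ∞) (fun t => β t x)) ∧
  ∀ (t : ℝ) (x : E), β (t + 1) x = φ (β t x) - r x

/-- The functional `Q(β)(x,y) = (1/2)(ℓ ∧_B β_0)(x,y) + (1/2)∫₀¹ (β_t ∧_B β̇_t)(x,y) dt`. -/
noncomputable def Qfun {𝔤 E : Type*} [NormedAddCommGroup 𝔤] [NormedSpace ℝ 𝔤]
    [AddCommGroup E] [Module ℝ E]
    (B : 𝔤 →ₗ[ℝ] 𝔤 →ₗ[ℝ] ℝ) (ℓ : E → 𝔤) (β : ℝ → E → 𝔤) (x y : E) : ℝ :=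
  (1/2 : ℝ) * wedgeB B ℓ (β 0) x y
    + (1/2 : ℝ) * ∫ t in (0:ℝ)..1,
        wedgeB B (β t) (fun e => deriv (fun s => β s e) t) x y

theorem Continuous.bilinear_apply_of_finiteDimensional {𝕜 M N F X : Type*}
    [NontriviallyNormedField 𝕜] [CompleteSpace 𝕜]
    [NormedAddCommGroup M] [NormedSpace 𝕜 M] [FiniteDimensional 𝕜 M]
    [NormedAddCommGroup N] [NormedSpace 𝕜 N] [FiniteDimensional 𝕜 N]
    [NormedAddCommGroup F] [NormedSpace 𝕜 F] [TopologicalSpace X]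
    (B : M →ₗ[𝕜] N →ₗ[𝕜] F) {f : X → M} {g : X → N} (hf : Continuous f) (hg : Continuous g) :
    Continuous fun t => B (f t) (g t) :=
  let Bc : M →ₗ[𝕜] N →L[𝕜] F := LinearMap.toContinuousLinearMap.toLinearMap ∘ₗ B
  (Bc.continuous_of_finiteDimensional.comp hf).clm_apply hg

section wedge

variable {𝔤 E : Type*} [NormedAddCommGroup 𝔤] [NormedSpace ℝ 𝔤] [AddCommGroup E] [Module ℝ E]
  (B : 𝔤 →ₗ[ℝ] 𝔤 →ₗ[ℝ] ℝ) (x y : E)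

theorem wedgeB_add_left (a a' b : E → 𝔤) :
    wedgeB B (fun e => a e + a' e) b x y = wedgeB B a b x y + wedgeB B a' b x y := by
  simp only [wedgeB, map_add, LinearMap.add_apply]
  ring

theorem wedgeB_add_right (a b b' : E → 𝔤) :
    wedgeB B a (fun e => b e + b' e) x y = wedgeB B a b x y + wedgeB B a b' x y := by
  simp only [wedgeB, map_add]
  ring

theorem wedgeB_linearEquiv_symm_left (φ : 𝔤 ≃ₗ[ℝ] 𝔤) (hφ : ∀ u v : 𝔤, B (φ u) (φ v) = B u v)
    (a b : E → 𝔤) :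
    wedgeB B (fun e => φ.symm (a e)) b x y = wedgeB B a (fun e => φ (b e)) x y := by
  simp only [wedgeB, ← hφ (φ.symm _), LinearEquiv.apply_symm_apply]

noncomputable def wedgeDeriv (γ : ℝ → E → 𝔤) (t : ℝ) : ℝ :=
  wedgeB B (γ t) (fun e => deriv (fun s => γ s e) t) x y

theorem Qfun_eq_wedgeDeriv (ℓ : E → 𝔤) (β : ℝ → E → 𝔤) :
    Qfun B ℓ β x y
      = (1/2 : ℝ) * wedgeB B ℓ (β 0) x y + (1/2 : ℝ) * ∫ t in (0:ℝ)..1, wedgeDeriv B x y β t :=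
  rfl

theorem continuous_wedgeDeriv [FiniteDimensional ℝ 𝔤] {γ : ℝ → E → 𝔤}
    (hγ : ∀ e, ContDiff ℝ 1 fun t => γ t e) : Continuous (wedgeDeriv B x y γ) := by
  have hval : ∀ e, Continuous fun t => γ t e := fun e => (hγ e).continuous
  have hder : ∀ e, Continuous fun t => deriv (fun s => γ s e) t := fun e =>
    (hγ e).continuous_deriv le_rfl
  exact ((hval x).bilinear_apply_of_finiteDimensional B (hder y)).sub
    ((hval y).bilinear_apply_of_finiteDimensional B (hder x))

theorem wedgeDeriv_congr_of_eventuallyEq {γ δ : ℝ → E → 𝔤} {t : ℝ} (h : γ =ᶠ[nhds t] δ) :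
    wedgeDeriv B x y γ t = wedgeDeriv B x y δ t := by
  have hder : ∀ e, deriv (fun s => γ s e) t = deriv (fun s => δ s e) t := fun e =>
    (h.fun_comp (· e)).deriv_eq
  simp only [wedgeDeriv, h.eq_of_nhds, hder]

theorem integral_wedgeDeriv_congr {γ δ : ℝ → E → 𝔤} {p q : ℝ} (hpq : p ≤ q)
    (h : Set.EqOn γ δ (Set.Icc p q)) :
    ∫ t in p..q, wedgeDeriv B x y γ t = ∫ t in p..q, wedgeDeriv B x y δ t :=
  intervalIntegral.integral_congr_Ioo_of_le hpq fun _ ht =>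
    wedgeDeriv_congr_of_eventuallyEq B x y <| Filter.eventuallyEq_of_mem
      (Ioo_mem_nhds ht.1 ht.2) fun _ hs => h (Set.Ioo_subset_Icc_self hs)

theorem wedgeDeriv_comp_affine (γ : ℝ → E → 𝔤) (a c t : ℝ) :
    wedgeDeriv B x y (fun s => γ (a * s + c)) t = a * wedgeDeriv B x y γ (a * t + c) := by
  have hder : ∀ e, deriv (fun s => γ (a * s + c) e) t = a • deriv (fun s => γ s e) (a * t + c) :=
    fun e => by
      rw [deriv_comp_mul_left a (fun u => γ (u + c) e) t,
        deriv_comp_add_const (fun s => γ s e) c (a * t)]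
  simp only [wedgeDeriv, wedgeB, hder, map_smul, smul_eq_mul]
  ring

/-- The factor `a` of the velocity cancels the Jacobian `a⁻¹` of the substitution. -/
theorem integral_wedgeDeriv_comp_affine (γ : ℝ → E → 𝔤) {a : ℝ} (ha : a ≠ 0) (c p q : ℝ) :
    ∫ t in p..q, wedgeDeriv B x y (fun s => γ (a * s + c)) t
      = ∫ t in a * p + c..a * q + c, wedgeDeriv B x y γ t := by
  simp only [wedgeDeriv_comp_affine, intervalIntegral.integral_const_mul,
    intervalIntegral.integral_comp_mul_add (wedgeDeriv B x y γ) ha, smul_eq_mul,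
    mul_inv_cancel_left₀ ha]

theorem integral_wedgeDeriv_concat [FiniteDimensional ℝ 𝔤] {γ β₁ β₂ : ℝ → E → 𝔤}
    (hγ : ∀ e, ContDiff ℝ 1 fun t => γ t e)
    (h₁ : Set.EqOn γ (fun t => β₁ (2 * t)) (Set.Icc 0 (1/2)))
    (h₂ : Set.EqOn γ (fun t => β₂ (2 * t - 1)) (Set.Icc (1/2) 1)) :
    ∫ t in (0:ℝ)..1, wedgeDeriv B x y γ t
      = (∫ t in (0:ℝ)..1, wedgeDeriv B x y β₁ t) + ∫ t in (0:ℝ)..1, wedgeDeriv B x y β₂ t := by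
  have h₁' : Set.EqOn γ (fun t => β₁ (2 * t + 0)) (Set.Icc 0 (1/2)) := by simpa using h₁
  have h₂' : Set.EqOn γ (fun t => β₂ (2 * t + -1)) (Set.Icc (1/2) 1) := by
    simpa [← sub_eq_add_neg] using h₂
  have hγ_cont := continuous_wedgeDeriv B x y hγ
  rw [← intervalIntegral.integral_add_adjacent_intervals
      (hγ_cont.intervalIntegrable (μ := MeasureTheory.volume) 0 (1/2))
      (hγ_cont.intervalIntegrable (1/2) 1),
    integral_wedgeDeriv_congr B x y (by norm_num) h₁',
    integral_wedgeDeriv_congr B x y (by norm_num) h₂',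
    integral_wedgeDeriv_comp_affine B x y β₁ two_ne_zero,
    integral_wedgeDeriv_comp_affine B x y β₂ two_ne_zero]
  norm_num

end wedge

theorem Q_multiplicative_general
    {𝔤 E : Type*} [NormedAddCommGroup 𝔤] [NormedSpace ℝ 𝔤] [FiniteDimensional ℝ 𝔤]
    [AddCommGroup E] [Module ℝ E]
    (B : 𝔤 →ₗ[ℝ] 𝔤 →ₗ[ℝ] ℝ)
    (φ' φ'' : 𝔤 ≃ₗ[ℝ] 𝔤)
    (hφ'B : ∀ x y : 𝔤, B (φ' x) (φ' y) = B x y)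
    (ℓ' ℓ'' : E →ₗ[ℝ] 𝔤)
    (β' β'' : ℝ → E →ₗ[ℝ] 𝔤)
    (hβ' : QuasiPeriodic ⇑φ' (fun x => φ' (ℓ' x)) β')
    (hmatch : ∀ x : E, β' 1 x = β'' 0 x)
    (μ : ℝ → E →ₗ[ℝ] 𝔤)
    (hμ_smooth : ∀ x : E, ContDiff ℝ (⊤ : ℕ∞) (fun t => μ t x))
    (hμ_left : ∀ t ∈ Set.Icc (0 : ℝ) (1/2), ∀ x : E, μ t x = β' (2 * t) x)
    (hμ_right : ∀ t ∈ Set.Icc (1/2 : ℝ) 1, ∀ x : E, μ t x = β'' (2 * t - 1) x)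
    (hμ_per : ∀ (t : ℝ) (x : E),
      μ (t + 1) x = φ'' (φ' (μ t x)) - (φ'' (φ' (ℓ' x)) + φ'' (ℓ'' x))) :
    QuasiPeriodic (fun z => φ'' (φ' z)) (fun x => φ'' (φ' (ℓ' x + φ'.symm (ℓ'' x)))) μ ∧
    ∀ x y : E,
      Qfun B (fun e => ℓ' e + φ'.symm (ℓ'' e)) (fun t => ⇑(μ t)) x y
        = Qfun B ⇑ℓ' (fun t => ⇑(β' t)) x y + Qfun B ⇑ℓ'' (fun t => ⇑(β'' t)) x y
          + (1/2 : ℝ) * wedgeB B ⇑ℓ'' (fun e => φ' (ℓ' e)) x y := by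
  refine ⟨⟨hμ_smooth, fun t x => ?_⟩, fun x y => ?_⟩
  · simp [hμ_per t x, map_add]
  have hμ0 : ⇑(μ 0) = ⇑(β' 0) := funext fun e => by simpa using hμ_left 0 (by norm_num) e
  have hβ'0 : (fun e => φ' (β' 0 e)) = fun e => β'' 0 e + φ' (ℓ' e) :=
    funext fun e => by rw [← hmatch e, ← zero_add (1 : ℝ), hβ'.2 0 e, sub_add_cancel]
  have hboundary : wedgeB B (fun e => ℓ' e + φ'.symm (ℓ'' e)) ⇑(μ 0) x y
      = wedgeB B ⇑ℓ' ⇑(β' 0) x y + wedgeB B ⇑ℓ'' ⇑(β'' 0) x y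
        + wedgeB B ⇑ℓ'' (fun e => φ' (ℓ' e)) x y := by
    rw [hμ0, wedgeB_add_left, wedgeB_linearEquiv_symm_left B x y φ' hφ'B, hβ'0,
      wedgeB_add_right, add_assoc]
  rw [Qfun_eq_wedgeDeriv, Qfun_eq_wedgeDeriv, Qfun_eq_wedgeDeriv, hboundary,
    integral_wedgeDeriv_concat B x y (β₁ := fun t => ⇑(β' t)) (β₂ := fun t => ⇑(β'' t))
      (fun e => (hμ_smooth e).of_le (by exact_mod_cast le_top))
      (fun t ht => funext (hμ_left t ht)) (fun t ht => funext (hμ_right t ht))]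
  ring

/-- multiplicative property of `Q`: for the concatenation
`μ = β'' * β'` of a `(φ', ℓ')`-quasiperiodic family `β'` and a
`(φ'', ℓ'')`-quasiperiodic family `β''` with `β'_1 = β''_0`, the family `μ` is
quasiperiodic for the composite gauge datum `(φ''∘φ', ℓ' + φ'⁻¹∘ℓ'')`, and
`Q(μ) = Q(β') + Q(β'') + (1/2)(ℓ'' ∧_B r')`, where `r' = φ'∘ℓ'`, `r'' = φ''∘ℓ''`. -/
theorem Q_multiplicative
    {𝔤 E : Type*} [NormedAddCommGroup 𝔤] [NormedSpace ℝ 𝔤] [FiniteDimensional ℝ 𝔤]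
    [AddCommGroup E] [Module ℝ E]
    (br : 𝔤 →ₗ[ℝ] 𝔤 →ₗ[ℝ] 𝔤)
    (br_alt : ∀ x : 𝔤, br x x = 0)
    (br_jacobi : ∀ x y z : 𝔤, br (br x y) z + br (br y z) x + br (br z x) y = 0)
    (B : 𝔤 →ₗ[ℝ] 𝔤 →ₗ[ℝ] ℝ)
    (B_symm : ∀ x y : 𝔤, B x y = B y x)
    (B_inv : ∀ x y z : 𝔤, B (br x y) z = B x (br y z))
    (φ' φ'' : 𝔤 ≃ₗ[ℝ] 𝔤)
    (hφ'B : ∀ x y : 𝔤, B (φ' x) (φ' y) = B x y)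
    (hφ''B : ∀ x y : 𝔤, B (φ'' x) (φ'' y) = B x y)
    (ℓ' ℓ'' : E →ₗ[ℝ] 𝔤)
    (β' β'' : ℝ → E →ₗ[ℝ] 𝔤)
    (hβ' : QuasiPeriodic ⇑φ' (fun x => φ' (ℓ' x)) β')
    (hβ'' : QuasiPeriodic ⇑φ'' (fun x => φ'' (ℓ'' x)) β'')
    (hmatch : ∀ x : E, β' 1 x = β'' 0 x)
    (μ : ℝ → E →ₗ[ℝ] 𝔤)
    (hμ_smooth : ∀ x : E, ContDiff ℝ (⊤ : ℕ∞) (fun t => μ t x))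
    (hμ_left : ∀ t ∈ Set.Icc (0 : ℝ) (1/2), ∀ x : E, μ t x = β' (2 * t) x)
    (hμ_right : ∀ t ∈ Set.Icc (1/2 : ℝ) 1, ∀ x : E, μ t x = β'' (2 * t - 1) x)
    (hμ_per : ∀ (t : ℝ) (x : E),
      μ (t + 1) x = φ'' (φ' (μ t x)) - (φ'' (φ' (ℓ' x)) + φ'' (ℓ'' x))) :
    QuasiPeriodic (fun z => φ'' (φ' z)) (fun x => φ'' (φ' (ℓ' x + φ'.symm (ℓ'' x)))) μ ∧
    ∀ x y : E,
      Qfun B (fun e => ℓ' e + φ'.symm (ℓ'' e)) (fun t => ⇑(μ t)) x y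
        = Qfun B ⇑ℓ' (fun t => ⇑(β' t)) x y + Qfun B ⇑ℓ'' (fun t => ⇑(β'' t)) x y
          + (1/2 : ℝ) * wedgeB B ⇑ℓ'' (fun e => φ' (ℓ' e)) x y :=
  Q_multiplicative_general B φ' φ'' hφ'B ℓ' ℓ'' β' β'' hβ' hmatch μ hμ_smooth hμ_left hμ_right
    hμ_per
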